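/- arXiv:1811.08219 — 10 statements merged into one kernel-verified Lean document; each statement's English description precedes it below -/
import Mathlib

section
/- Let A be a unital algebra and R a Rota–Baxter operator on A of nonzero weight λ. If R(1) is a scalar multiple of 1, then A decomposes as the direct vector-space sum of the subalgebras ker(R) and ker(R + λ·id), and R is the splitting Rota–Baxter operator associated to this decomposition. -/
/-!
Evaluating the Rota–Baxter identity at `(x, 1)` and using `R 1 = c • 1` gives `R ∘ R = -λ R`, so
`-λ⁻¹ R` is an idempotent whose kernel is `ker R` and whose range is `ker (R + λ id)`; hence the two
kernels are complementary. Closure of each kernel under multiplication is read off the identity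
directly: for `x, y ∈ ker R` it says `λ R (xy) = 0`, and for `x, y ∈ ker (R + λ id)` it says
`λ² xy = -λ R (xy)`.
-/

def IsRotaBaxter (F : Type*) {A : Type*} [Field F] [NonUnitalNonAssocRing A]
    [Module F A] (lam : F) (R : A →ₗ[F] A) : Prop :=
  ∀ x y : A, R x * R y = R (R x * y + x * R y + lam • (x * y))

open LinearMap

theorem LinearMap.isCompl_ker_ker_add_smul_id {K M : Type*} [Field K] [AddCommGroup M]
    [Module K M] {lam : K} (hlam : lam ≠ 0) {f : M →ₗ[K] M} (hf : f ∘ₗ f = -(lam • f)) :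
    IsCompl (ker f) (ker (f + lam • LinearMap.id)) := by
  set p : M →ₗ[K] M := -lam⁻¹ • f
  have hp : IsIdempotentElem p := by
    change (-lam⁻¹ • f) ∘ₗ (-lam⁻¹ • f) = -lam⁻¹ • f
    rw [smul_comp, comp_smul, hf]
    match_scalars
    field_simp
  have hker : ker p = ker f := ker_smul f _ (neg_ne_zero.mpr (inv_ne_zero hlam))
  have hrange : range p = ker (f + lam • LinearMap.id) := by
    have h1p : 1 - p = lam⁻¹ • (f + lam • LinearMap.id) := by
      rw [Module.End.one_eq_id]
      match_scalars <;> field_simp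
    rw [hp.range_eq_ker_one_sub, h1p, ker_smul _ _ (inv_ne_zero hlam)]
  rw [← hker, ← hrange]
  exact hp.isCompl.symm

namespace IsRotaBaxter

variable {F A : Type*} [Field F] {lam : F}

theorem mul_mem_ker [NonUnitalNonAssocRing A] [Module F A] {R : A →ₗ[F] A}
    (hR : IsRotaBaxter F lam R) (hlam : lam ≠ 0) {x y : A} (hx : x ∈ ker R) (hy : y ∈ ker R) :
    x * y ∈ ker R := by
  rw [mem_ker] at hx hy ⊢
  have h := hR x y
  rw [hx, hy, zero_mul, mul_zero, zero_mul, zero_add, zero_add, map_smul] at h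
  exact (smul_eq_zero.mp h.symm).resolve_left hlam

theorem mul_mem_ker_add_smul_id [NonUnitalNonAssocRing A] [Module F A] [IsScalarTower F A A]
    [SMulCommClass F A A] {R : A →ₗ[F] A} (hR : IsRotaBaxter F lam R) (hlam : lam ≠ 0) {x y : A}
    (hx : x ∈ ker (R + lam • LinearMap.id)) (hy : y ∈ ker (R + lam • LinearMap.id)) :
    x * y ∈ ker (R + lam • LinearMap.id) := by
  simp only [mem_ker, LinearMap.add_apply, LinearMap.smul_apply, id_apply] at hx hy ⊢
  have h := hR x y
  rw [eq_neg_of_add_eq_zero_left hx, eq_neg_of_add_eq_zero_left hy, neg_mul_neg, neg_mul,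
    mul_neg, smul_mul_assoc, smul_mul_assoc, mul_smul_comm, smul_smul] at h
  have hRxy : (lam * lam) • (x * y) = -(lam • R (x * y)) := by
    rw [h, ← map_smul, ← map_neg]
    congr 1
    abel
  have hsmul : lam • (R (x * y) + lam • (x * y)) = 0 := by
    rw [smul_add, smul_smul, hRxy]
    abel
  exact (smul_eq_zero.mp hsmul).resolve_left hlam

theorem comp_self_of_map_one_eq_smul_one [Ring A] [Algebra F A] {R : A →ₗ[F] A}
    (hR : IsRotaBaxter F lam R) {c : F} (hR1 : R 1 = c • (1 : A)) : R ∘ₗ R = -(lam • R) := by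
  ext x
  have h := hR x 1
  rw [hR1, mul_one, mul_smul_comm, mul_smul_comm, mul_one, mul_one, map_add, map_add, map_smul,
    map_smul] at h
  have h0 : R (R x) + lam • R x = 0 := add_eq_left.mp <|
    calc c • R x + (R (R x) + lam • R x) = R (R x) + c • R x + lam • R x := by abel
      _ = c • R x := h.symm
  simpa using eq_neg_of_add_eq_zero_left h0

end IsRotaBaxter

theorem stmt5 (F A : Type*) [Field F] [Ring A] [Algebra F A]
    (lam : F) (hlam : lam ≠ 0) (R : A →ₗ[F] A) (hR : IsRotaBaxter F lam R)
    (c : F) (hR1 : R 1 = c • (1 : A)) :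
    (∀ x ∈ LinearMap.ker R, ∀ y ∈ LinearMap.ker R, x * y ∈ LinearMap.ker R) ∧
    (∀ x ∈ LinearMap.ker (R + lam • LinearMap.id),
      ∀ y ∈ LinearMap.ker (R + lam • LinearMap.id),
        x * y ∈ LinearMap.ker (R + lam • LinearMap.id)) ∧
    IsCompl (LinearMap.ker R) (LinearMap.ker (R + lam • LinearMap.id)) :=
  ⟨fun _ hx _ hy => IsRotaBaxter.mul_mem_ker hR hlam hx hy,
    fun _ hx _ hy => IsRotaBaxter.mul_mem_ker_add_smul_id hR hlam hx hy,
    isCompl_ker_ker_add_smul_id hlam (IsRotaBaxter.comp_self_of_map_one_eq_smul_one hR hR1)⟩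
end

section
/- Let A = A₁ ⊕ A₂ be a direct sum of algebras and R a Rota–Baxter operator on A of weight λ. Then the linear map P : A₁ → A₁ defined by P(x₁) = Pr_{A₁}(R(x₁)) (the projection onto A₁ of R applied to x₁ ∈ A₁) is a Rota–Baxter operator on A₁ of weight λ. -/
section

variable {A₁ A₂ : Type*} [NonUnitalNonAssocRing A₁] [NonUnitalNonAssocRing A₂]

theorem Prod.mul_mk_zero (a : A₁ × A₂) (y : A₁) : a * (y, 0) = (a.1 * y, 0) := by
  simp [Prod.mul_def]

theorem Prod.mk_zero_mul (x : A₁) (b : A₁ × A₂) : (x, 0) * b = (x * b.1, 0) := by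
  simp [Prod.mul_def]

end

theorem stmt6 (F A₁ A₂ : Type*) [Field F]
    [NonUnitalNonAssocRing A₁] [Module F A₁]
    [NonUnitalNonAssocRing A₂] [Module F A₂]
    (lam : F) (R : (A₁ × A₂) →ₗ[F] (A₁ × A₂)) (hR : IsRotaBaxter F lam R) :
    IsRotaBaxter F lam
      (LinearMap.fst F A₁ A₂ ∘ₗ R ∘ₗ LinearMap.inl F A₁ A₂) := by
  intro x y
  have h := congrArg Prod.fst (hR (x, 0) (y, 0))
  -- `A₁ × 0` is an ideal, so only first components of `R (x, 0)` and `R (y, 0)` enter `h`.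
  rw [Prod.fst_mul, Prod.mul_mk_zero, Prod.mk_zero_mul, Prod.mk_mul_mk, mul_zero, Prod.smul_mk_zero,
    Prod.mk_add_mk, Prod.mk_add_mk, add_zero, add_zero] at h
  exact h
end

section
/- Let A = Fe₁ ⊕ ⋯ ⊕ Feₙ be a direct sum of n copies of a field F (with componentwise multiplication, eᵢeⱼ = δᵢⱼeᵢ). A linear operator R with R(eᵢ) = Σₖ rᵢₖeₖ is a Rota–Baxter operator of weight 1 on A if and only if: (SF1) for each i, either rᵢᵢ = 0 and rᵢₖ ∈ {0,1} for all k ≠ i, or rᵢᵢ = -1 and rᵢₖ ∈ {0,-1} for all k ≠ i; (SF2) if rᵢₖ = rₖᵢ = 0 for i ≠ k, then rᵢₗrₖₗ = 0 for all l ∉ {i,k}; (SF3) if rᵢₖ ≠ 0 for i ≠ k, then rₖᵢ = 0, and for all l ∉ {i,k}, either rₖₗ = 0 or rᵢₗ = rᵢₖ. -/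
theorem isRotaBaxter_iff_basis {F A ι : Type*} [Field F] [NonUnitalNonAssocRing A] [Module F A]
    [SMulCommClass F A A] [IsScalarTower F A A] (b : Module.Basis ι F A) (lam : F) (R : A →ₗ[F] A) :
    IsRotaBaxter F lam R ↔
      ∀ i j, R (b i) * R (b j) = R (R (b i) * b j + b i * R (b j) + lam • (b i * b j)) := by
  refine ⟨fun h i j => h _ _, fun h x y => ?_⟩
  have hB : (LinearMap.mul F A).compl₁₂ R R =
      ((LinearMap.mul F A).compl₁₂ R LinearMap.id + (LinearMap.mul F A).compl₁₂ LinearMap.id R +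
        lam • LinearMap.mul F A).compr₂ R :=
    LinearMap.ext_basis b b fun i j => by simpa using h i j
  simpa using LinearMap.congr_fun₂ hB x y

theorem isRotaBaxter_pi_iff {F ι : Type*} [Field F] [Finite ι] [DecidableEq ι] (lam : F)
    (R : (ι → F) →ₗ[F] (ι → F)) :
    IsRotaBaxter F lam R ↔ ∀ i j l,
      R (Pi.single i 1) l * R (Pi.single j 1) l =
        R (Pi.single i 1) j * R (Pi.single j 1) l + R (Pi.single j 1) i * R (Pi.single i 1) l +
          if i = j then lam * R (Pi.single i 1) l else 0 := by
  rw [isRotaBaxter_iff_basis (Pi.basisFun F ι)]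
  refine forall₂_congr fun i j => ?_
  have hmul : ∀ (x : ι → F) k, x * Pi.single k 1 = x k • Pi.single k 1 := by
    intro x k; ext m; by_cases h : m = k <;> simp [h]
  simp only [Pi.basisFun_apply, funext_iff, hmul, mul_comm (Pi.single i 1)]
  refine forall_congr' fun l => ?_
  rcases eq_or_ne i j with rfl | hij
  · simp
  · simp [hij]

section
variable {F ι : Type*} [Field F] (r : ι → ι → F)

theorem rotaBaxter_diagonal_equations_iff (i : ι) :
    (∀ l, r i l * r i l = r i i * r i l + r i i * r i l + r i l) ↔
      (r i i = 0 ∧ ∀ k ≠ i, r i k = 0 ∨ r i k = 1) ∨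
        (r i i = -1 ∧ ∀ k ≠ i, r i k = 0 ∨ r i k = -1) := by
  constructor
  · intro h
    have hii : r i i * (r i i + 1) = 0 := by linear_combination -h i
    have hk : ∀ k, r i k * (r i k - (2 * r i i + 1)) = 0 := fun k => by linear_combination h k
    rcases mul_eq_zero.1 hii with h0 | h1
    · refine .inl ⟨h0, fun k _ => ?_⟩
      simpa [h0, sub_eq_zero] using hk k
    · rw [add_eq_zero_iff_eq_neg] at h1
      refine .inr ⟨h1, fun k _ => ?_⟩
      have := hk k
      rw [h1] at this
      rcases mul_eq_zero.1 this with h | h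
      · exact .inl h
      · exact .inr (by linear_combination h)
  · rintro (⟨hii, hk⟩ | ⟨hii, hk⟩) l <;> rcases eq_or_ne l i with rfl | hl
    · rw [hii]; ring
    · rcases hk l hl with h | h <;> rw [hii, h] <;> ring
    · rw [hii]; ring
    · rcases hk l hl with h | h <;> rw [hii, h] <;> ring

theorem rotaBaxter_offDiagonal_equations_iff :
    (∀ i j, i ≠ j → ∀ l, r i l * r j l = r i j * r j l + r j i * r i l) ↔
      (∀ i k, i ≠ k → r i k = 0 → r k i = 0 → ∀ l, l ≠ i → l ≠ k → r i l * r k l = 0) ∧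
        (∀ i k, i ≠ k → r i k ≠ 0 →
          r k i = 0 ∧ ∀ l, l ≠ i → l ≠ k → r k l = 0 ∨ r i l = r i k) := by
  constructor
  · intro h
    refine ⟨fun i k hik hik0 hki0 l _ _ => ?_, fun i k hik hne => ?_⟩
    · simpa [hik0, hki0] using h i k hik l
    · have hki : r k i = 0 :=
        (mul_eq_zero.1 (by linear_combination -h i k hik i : r i k * r k i = 0)).resolve_left hne
      refine ⟨hki, fun l _ _ => ?_⟩
      have hl : r k l * (r i l - r i k) = 0 := by linear_combination h i k hik l + r i l * hki
      rcases mul_eq_zero.1 hl with h | h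
      · exact .inl h
      · exact .inr (sub_eq_zero.1 h)
  · rintro ⟨sf2, sf3⟩ i j hij l
    have hprod : r i j * r j i = 0 := by
      by_cases hrij : r i j = 0
      · simp [hrij]
      · simp [(sf3 i j hij hrij).1]
    rcases eq_or_ne l i with rfl | hli
    · linear_combination -hprod
    rcases eq_or_ne l j with rfl | hlj
    · linear_combination -hprod
    by_cases hrij : r i j = 0
    · by_cases hrji : r j i = 0
      · rw [hrij, hrji, sf2 i j hij hrij hrji l hli hlj]; ring
      · rcases (sf3 j i hij.symm hrji).2 l hlj hli with h | h <;> rw [hrij, h] <;> ring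
    · obtain ⟨hji, hl⟩ := sf3 i j hij hrij
      rcases hl l hli hlj with h | h <;> rw [hji, h] <;> ring

end

theorem stmt7 (F : Type*) [Field F] (n : ℕ)
    (R : (Fin n → F) →ₗ[F] (Fin n → F))
    (r : Fin n → Fin n → F) (hr : ∀ i k, r i k = R (Pi.single i 1) k) :
    IsRotaBaxter F 1 R ↔
      ((∀ i : Fin n,
          (r i i = 0 ∧ ∀ k ≠ i, r i k = 0 ∨ r i k = 1) ∨
          (r i i = -1 ∧ ∀ k ≠ i, r i k = 0 ∨ r i k = -1)) ∧
       (∀ i k : Fin n, i ≠ k → r i k = 0 → r k i = 0 →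
          ∀ l, l ≠ i → l ≠ k → r i l * r k l = 0) ∧
       (∀ i k : Fin n, i ≠ k → r i k ≠ 0 →
          r k i = 0 ∧ ∀ l, l ≠ i → l ≠ k → r k l = 0 ∨ r i l = r i k)) := by
  simp only [isRotaBaxter_pi_iff, ← hr, ← rotaBaxter_diagonal_equations_iff r,
    ← rotaBaxter_offDiagonal_equations_iff r]
  constructor
  · intro h
    exact ⟨fun i l => by simpa using h i i l, fun i j hij l => by simpa [hij] using h i j l⟩
  · rintro ⟨hdiag, hoff⟩ i j l
    rcases eq_or_ne i j with rfl | hij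
    · simpa using hdiag i l
    · simpa [hij] using hoff i j hij l
end

section
/- Let A = Fe₁ ⊕ ⋯ ⊕ Feₙ be a direct sum of copies of a field F with componentwise multiplication, and fix 1 ≤ s ≤ n. The linear operator R defined by R(eᵢ) = Σ_{l=i+1}^{s} e_l for 1 ≤ i < s, R(e_s) = 0, and R(eᵢ) = -Σ_{l=i}^{n} e_l for s+1 ≤ i ≤ n, is a Rota–Baxter operator on A of weight 1. -/
/-!
The Rota–Baxter identity is bilinear in `x, y`, so it suffices to check it on pairs of basis
vectors. On the orthogonal idempotents `eᵢ` of `Fⁿ` it becomes, coordinatewise, a scalar identity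
between the matrix entries `R(eᵢ)ₗ`, which for the given operator is a finite case analysis on the
relative order of `i`, `j`, `l` and `s`.
-/

theorem IsRotaBaxter.of_basis {F A ι : Type*} [Field F] [NonUnitalNonAssocRing A] [Module F A]
    [SMulCommClass F A A] [IsScalarTower F A A] (b : Module.Basis ι F A) (lam : F) (R : A →ₗ[F] A)
    (h : ∀ i j, R (b i) * R (b j) = R (R (b i) * b j + b i * R (b j) + lam • (b i * b j))) :
    IsRotaBaxter F lam R := by
  let μ := LinearMap.mul F A
  have key : μ.compl₁₂ R R =
      (μ.compl₁₂ R LinearMap.id + μ.compl₁₂ LinearMap.id R + lam • μ).compr₂ R :=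
    b.ext fun i => b.ext fun j => by simpa [μ] using h i j
  intro x y
  simpa [μ] using LinearMap.congr_fun₂ key x y

theorem IsRotaBaxter.of_pi_single {F ι : Type*} [Field F] [Finite ι] [DecidableEq ι] (lam : F)
    (R : (ι → F) →ₗ[F] (ι → F))
    (h : ∀ i j l, R (Pi.single i 1) l * R (Pi.single j 1) l =
      R (Pi.single i 1) j * R (Pi.single j 1) l + R (Pi.single j 1) i * R (Pi.single i 1) l +
        if i = j then lam * R (Pi.single i 1) l else 0) :
    IsRotaBaxter F lam R := by
  have mul_single : ∀ (x : ι → F) j, x * Pi.single j 1 = x j • Pi.single j 1 := fun x j => by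
    ext k
    by_cases hk : k = j <;> simp [hk]
  refine IsRotaBaxter.of_basis (Pi.basisFun F ι) lam R fun i j => ?_
  ext l
  have single_mul_single :
      (Pi.single i 1 * Pi.single j 1 : ι → F) = if i = j then Pi.single i 1 else 0 := by
    rw [mul_single]
    by_cases hij : i = j <;> simp [hij, eq_comm]
  simp only [Pi.basisFun_apply]
  rw [mul_comm (Pi.single i 1), mul_single, mul_single, single_mul_single]
  by_cases hij : i = j
  · subst hij
    simpa using h i i l
  · simpa [hij] using h i j l

theorem stmt8 (F : Type*) [Field F] (n : ℕ) (s : Fin n)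
    (R : (Fin n → F) →ₗ[F] (Fin n → F))
    (hdef : ∀ i l : Fin n,
      R (Pi.single i 1) l =
        if i < s then (if i < l ∧ l ≤ s then 1 else 0)
        else if i = s then 0
        else if i ≤ l then -1 else 0) :
    IsRotaBaxter F 1 R := by
  refine IsRotaBaxter.of_pi_single 1 R fun i j l => ?_
  simp only [hdef, one_mul]
  split_ifs <;> first | (exfalso; omega) | norm_num
end

section
/- If R is a Rota–Baxter operator of weight 1 on A = Fe₁ ⊕ ⋯ ⊕ Feₙ with matrix (rᵢⱼ) given by R(eᵢ) = Σₖ rᵢₖeₖ, then rᵢₖ rₖᵢ = 0 for all i ≠ k. -/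
/-!
Apply the Rota–Baxter identity to `eᵢ, eₖ` and read off the `i`-th coordinate. Since
`x * eₖ = xₖ eₖ` and `eᵢ eₖ = 0`, the right-hand side is `R (rᵢₖ eₖ + rₖᵢ eᵢ)`, so the identity
becomes `rᵢᵢ rₖᵢ = rᵢₖ rₖᵢ + rₖᵢ rᵢᵢ`.
-/

section

variable {F ι : Type*} [Field F] [DecidableEq ι]

theorem Pi.mul_single_one_eq_smul (x : ι → F) (k : ι) :
    x * Pi.single k 1 = x k • Pi.single k 1 := by
  rw [← Pi.single_mul_right, mul_one, ← Pi.single_smul, smul_eq_mul, mul_one]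

theorem Pi.single_one_mul_single_one_of_ne {i k : ι} (hik : i ≠ k) :
    (Pi.single i 1 : ι → F) * Pi.single k 1 = 0 := by
  rw [Pi.mul_single_one_eq_smul, Pi.single_eq_of_ne hik.symm, zero_smul]

theorem IsRotaBaxter.apply_single_mul_apply_single_eq_zero {lam : F}
    {R : (ι → F) →ₗ[F] (ι → F)} (hR : IsRotaBaxter F lam R) {i k : ι} (hik : i ≠ k) :
    R (Pi.single i 1) k * R (Pi.single k 1) i = 0 := by
  have h := congrFun (hR (Pi.single i 1) (Pi.single k 1)) i
  rw [Pi.single_one_mul_single_one_of_ne hik, smul_zero, add_zero, Pi.mul_single_one_eq_smul,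
    mul_comm (Pi.single i 1), Pi.mul_single_one_eq_smul, map_add, map_smul, map_smul] at h
  simp only [Pi.mul_apply, Pi.add_apply, Pi.smul_apply, smul_eq_mul] at h
  linear_combination -h

end

theorem stmt9 (F : Type*) [Field F] (n : ℕ)
    (R : (Fin n → F) →ₗ[F] (Fin n → F)) (hR : IsRotaBaxter F 1 R)
    (r : Fin n → Fin n → F) (hr : ∀ i k, r i k = R (Pi.single i 1) k) :
    ∀ i k : Fin n, i ≠ k → r i k * r k i = 0 := by
  intro i k hik
  rw [hr, hr]
  exact hR.apply_single_mul_apply_single_eq_zero hik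
end

section
/- If R is a Rota–Baxter operator of weight 1 on A = Fe₁ ⊕ ⋯ ⊕ Feₙ with matrix (rᵢⱼ), then for each i, either rᵢᵢ = 0 and rᵢₖ ∈ {0,1} for all k ≠ i, or rᵢᵢ = -1 and rᵢₖ ∈ {0,-1} for all k ≠ i. -/
/-!
Applying the Rota–Baxter identity to `eᵢ, eᵢ` and using `R(eᵢ) eᵢ = rᵢᵢ eᵢ` gives
`R(eᵢ)² = (2 rᵢᵢ + λ) R(eᵢ)`, i.e. `rᵢₖ² = (2 rᵢᵢ + λ) rᵢₖ` for every `k`. For `k = i` and `λ = 1`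
this forces `rᵢᵢ ∈ {0, -1}`, and then every `rᵢₖ` is `0` or `2 rᵢᵢ + 1 = ±1`.
-/

namespace IsRotaBaxter

variable {F ι : Type*} [Field F] [DecidableEq ι] {lam : F} {R : (ι → F) →ₗ[F] (ι → F)}

theorem apply_single_mul_self (hR : IsRotaBaxter F lam R) (i : ι) :
    R (Pi.single i 1) * R (Pi.single i 1) =
      (2 * R (Pi.single i 1) i + lam) • R (Pi.single i 1) := by
  set e : ι → F := Pi.single i 1
  have hRe : R e * e = R e i • e := by
    rw [← Pi.single_mul_right, mul_one, ← Pi.single_smul, smul_eq_mul, mul_one]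
  have he : e * e = e := by rw [← Pi.single_mul, mul_one]
  rw [hR, mul_comm e, hRe, he, ← add_smul, ← add_smul, map_smul, two_mul]

theorem apply_single_apply_mul_self (hR : IsRotaBaxter F lam R) (i k : ι) :
    R (Pi.single i 1) k * R (Pi.single i 1) k =
      (2 * R (Pi.single i 1) i + lam) * R (Pi.single i 1) k :=
  congrFun (hR.apply_single_mul_self i) k

end IsRotaBaxter

theorem stmt10 (F : Type*) [Field F] (n : ℕ)
    (R : (Fin n → F) →ₗ[F] (Fin n → F)) (hR : IsRotaBaxter F 1 R)
    (r : Fin n → Fin n → F) (hr : ∀ i k, r i k = R (Pi.single i 1) k) :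
    ∀ i : Fin n,
      (r i i = 0 ∧ ∀ k ≠ i, r i k = 0 ∨ r i k = 1) ∨
      (r i i = -1 ∧ ∀ k ≠ i, r i k = 0 ∨ r i k = -1) := by
  intro i
  have key : ∀ k, r i k = 2 * r i i + 1 ∨ r i k = 0 := fun k =>
    mul_eq_mul_right_iff.mp (by simpa only [hr] using hR.apply_single_apply_mul_self i k)
  rcases key i with hii | hii
  · have hii : r i i = -1 := by linear_combination -hii
    refine Or.inr ⟨hii, fun k _ => (key k).symm.imp id fun hk => ?_⟩
    linear_combination hk + 2 * hii
  · refine Or.inl ⟨hii, fun k _ => (key k).symm.imp id fun hk => ?_⟩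
    linear_combination hk + 2 * hii
end

section
/- The only Rota–Baxter operator of weight 0 on A = Fe₁ ⊕ ⋯ ⊕ Feₙ (a direct sum of copies of a field with componentwise multiplication) is the zero operator. -/
theorem IsRotaBaxter.map_single_eq_zero {F ι : Type*} [Field F] [DecidableEq ι]
    {R : (ι → F) →ₗ[F] (ι → F)} (hR : IsRotaBaxter F 0 R) (a : ι) (c : F) :
    R (Pi.single a c) = 0 := by
  set r := R (Pi.single a c)
  have hsq : r * r = (2 * r a) • r := by
    have h := hR (Pi.single a c) (Pi.single a c)
    rwa [← Pi.single_mul_right, ← Pi.single_mul_left, zero_smul, add_zero, ← Pi.single_add,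
      mul_comm c, ← two_mul, ← mul_assoc, ← smul_eq_mul (2 * r a), Pi.single_smul',
      map_smul] at h
  have hra : r a = 0 := by
    have h := congrFun hsq a
    simp only [Pi.mul_apply, Pi.smul_apply, smul_eq_mul] at h
    exact mul_self_eq_zero.mp (by linear_combination -h)
  rw [hra, mul_zero, zero_smul] at hsq
  exact IsReduced.eq_zero r ⟨2, by rw [pow_two, hsq]⟩

theorem stmt11 (F : Type*) [Field F] (n : ℕ)
    (R : (Fin n → F) →ₗ[F] (Fin n → F)) (hR : IsRotaBaxter F 0 R) :
    R = 0 :=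
  LinearMap.pi_ext fun a c => by rw [hR.map_single_eq_zero a c, LinearMap.zero_apply]
end

section
/- The number of Rota–Baxter operators of weight 1 on A = F ⊕ F (direct sum of two copies of a field F, of characteristic not 2) is exactly 12. -/
section FinTwo

variable {F : Type*} [Field F]

lemma toLin'_fin_two_apply (a b c d : F) (x : Fin 2 → F) :
    Matrix.toLin' !![a, b; c, d] x = ![a * x 0 + b * x 1, c * x 0 + d * x 1] := by
  ext i
  fin_cases i <;> simp [Matrix.mulVec, Matrix.vecHead, Matrix.vecTail]

lemma isRotaBaxter_toLin'_iff (lam a b c d : F) :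
    IsRotaBaxter F lam (Matrix.toLin' !![a, b; c, d]) ↔
      a * (a + lam) = 0 ∧ d * (d + lam) = 0 ∧ b * c = 0 ∧
        c * c = c * (2 * a + lam) ∧ b * b = b * (2 * d + lam) := by
  simp only [IsRotaBaxter, toLin'_fin_two_apply, funext_iff, Fin.forall_fin_two, Pi.mul_apply,
    Pi.add_apply, Pi.smul_apply, smul_eq_mul, Matrix.cons_val_zero, Matrix.cons_val_one]
  constructor
  · intro h
    have h00 := h ![1, 0] ![1, 0]
    have h11 := h ![0, 1] ![0, 1]
    have h01 := (h ![1, 0] ![0, 1]).2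
    simp only [Matrix.cons_val_zero, Matrix.cons_val_one] at h00 h11 h01
    exact ⟨by linear_combination -h00.1, by linear_combination -h11.2,
      by linear_combination -h01, by linear_combination h00.2, by linear_combination h11.1⟩
  · rintro ⟨ha, hd, hbc, hc, hb⟩ x y
    constructor
    · linear_combination -(x 0 * y 0) * ha - (x 0 * y 1 + x 1 * y 0) * hbc + x 1 * y 1 * hb
    · linear_combination -(x 1 * y 1) * hd - (x 0 * y 1 + x 1 * y 0) * hbc + x 0 * y 0 * hc

def rotaBaxterMatrices (lam : F) : List (Matrix (Fin 2) (Fin 2) F) :=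
  [!![0, 0; 0, 0], !![0, lam; 0, 0], !![0, 0; lam, 0],
   !![0, 0; 0, -lam], !![0, -lam; 0, -lam], !![0, 0; lam, -lam],
   !![-lam, 0; 0, 0], !![-lam, lam; 0, 0], !![-lam, 0; -lam, 0],
   !![-lam, 0; 0, -lam], !![-lam, -lam; 0, -lam], !![-lam, 0; -lam, -lam]]

lemma rotaBaxterMatrices_nodup {lam : F} (hlam : lam ≠ 0) : (rotaBaxterMatrices lam).Nodup := by
  simp [rotaBaxterMatrices, hlam, hlam.symm]

lemma isRotaBaxter_toLin'_iff_mem (lam : F) (M : Matrix (Fin 2) (Fin 2) F) :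
    IsRotaBaxter F lam (Matrix.toLin' M) ↔ M ∈ rotaBaxterMatrices lam := by
  obtain ⟨a, b, c, d, rfl⟩ : ∃ a b c d : F, M = !![a, b; c, d] := ⟨_, _, _, _, M.eta_fin_two⟩
  simp only [isRotaBaxter_toLin'_iff, rotaBaxterMatrices, List.mem_cons, List.not_mem_nil,
    or_false, EmbeddingLike.apply_eq_iff_eq, Matrix.vecCons_inj, and_true]
  constructor
  · rintro ⟨ha, hd, hbc, hc, hb⟩
    have ha' : a = 0 ∨ a = -lam := by simpa [add_eq_zero_iff_eq_neg] using ha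
    have hd' : d = 0 ∨ d = -lam := by simpa [add_eq_zero_iff_eq_neg] using hd
    rw [mul_eq_mul_left_iff] at hc hb
    rcases ha' with rfl | rfl <;> rcases hd' with rfl | rfl <;> grind
  · rintro (h | h | h | h | h | h | h | h | h | h | h | h) <;>
      obtain ⟨⟨rfl, rfl⟩, rfl, rfl⟩ := h <;> refine ⟨?_, ?_, ?_, ?_, ?_⟩ <;> ring

theorem ncard_setOf_isRotaBaxter_fin_two {lam : F} (hlam : lam ≠ 0) :
    {R : (Fin 2 → F) →ₗ[F] (Fin 2 → F) | IsRotaBaxter F lam R}.ncard = 12 := by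
  classical
  rw [← Set.ncard_image_of_injective _ Matrix.toLin'.symm.injective,
    Matrix.toLin'.image_symm_eq_preimage, Set.preimage_ofPred_eq]
  simp_rw [isRotaBaxter_toLin'_iff_mem, ← List.coe_toFinset, Set.ncard_coe_finset,
    List.toFinset_card_of_nodup (rotaBaxterMatrices_nodup hlam)]
  rfl

end FinTwo

theorem stmt12_general (F : Type*) [Field F] :
    {R : (Fin 2 → F) →ₗ[F] (Fin 2 → F) | IsRotaBaxter F 1 R}.ncard = 12 :=
  ncard_setOf_isRotaBaxter_fin_two one_ne_zero

theorem stmt12 (F : Type*) [Field F] (h2 : (2 : F) ≠ 0) :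
    {R : (Fin 2 → F) →ₗ[F] (Fin 2 → F) | IsRotaBaxter F 1 R}.ncard = 12 :=
  stmt12_general F
end

section
/- Let A = Fe₁ ⊕ ⋯ ⊕ Feₙ be a direct sum of n copies of a field F and R a Rota–Baxter operator of weight 0 on A. Then the algebra A^R with product x ∘ y = R(x)y + xR(y) is isomorphic to the n-dimensional algebra with zero multiplication. -/
namespace IsRotaBaxter

variable {F ι : Type*} [Field F] {R : (ι → F) →ₗ[F] (ι → F)}

theorem apply_single_one [DecidableEq ι] (hR : IsRotaBaxter F 0 R) (i : ι) :
    R (Pi.single i 1) = 0 := by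
  set e : ι → F := Pi.single i 1
  set r := R e
  have single_mul : ∀ v : ι → F, e * v = v i • e := fun v ↦ by
    ext k
    by_cases hk : k = i <;> simp [e, hk]
  have hsq : r * r = (2 * r i) • r := by
    calc r * r = R (r * e + e * r) := by simpa using hR e e
      _ = R ((2 * r i) • e) := by rw [mul_comm r e, single_mul, ← two_smul F, smul_smul]
      _ = (2 * r i) • r := map_smul R _ e
  have hri : r i = 0 := by
    have h := congrFun hsq i
    simp only [Pi.mul_apply, Pi.smul_apply, smul_eq_mul] at h
    exact mul_self_eq_zero.mp (by linear_combination -h)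
  ext k
  simpa [hri] using congrFun hsq k

theorem eq_zero [Finite ι] (hR : IsRotaBaxter F 0 R) : R = 0 := by
  classical
  exact (Pi.basisFun F ι).ext fun i ↦ by simpa using hR.apply_single_one i

end IsRotaBaxter

/-- The algebra `A^R` is isomorphic (via a linear equivalence preserving
products) to `Fⁿ` endowed with the zero multiplication. -/
theorem stmt17 (F : Type*) [Field F] (n : ℕ)
    (R : (Fin n → F) →ₗ[F] (Fin n → F)) (hR : IsRotaBaxter F 0 R) :
    ∃ e : (Fin n → F) ≃ₗ[F] (Fin n → F),
      ∀ x y : Fin n → F, e (R x * y + x * R y) = 0 :=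
  ⟨LinearEquiv.refl F _, fun x y ↦ by simp [hR.eq_zero]⟩
end

section
/- Let A = F ⊕ F with componentwise multiplication and R any Rota–Baxter operator of nonzero weight λ on A. Then the algebra A^R with product x ∘ y = R(x)y + xR(y) + λxy is isomorphic to A itself. -/
namespace IsRotaBaxter

section

variable {F A : Type*} [Field F] [NonUnitalNonAssocRing A] [Module F A]
  [IsScalarTower F A A] [SMulCommClass F A A] {lam : F} {R : A →ₗ[F] A}

theorem add_smul_map_mul (hR : IsRotaBaxter F lam R) (x y : A) :
    R (R x * y + x * R y + lam • (x * y)) + lam • (R x * y + x * R y + lam • (x * y)) =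
      (R x + lam • x) * (R y + lam • y) := by
  rw [← hR]
  simp only [mul_add, add_mul, smul_add, smul_mul_assoc, mul_smul_comm, smul_smul]
  abel

end

variable {ι F : Type*} [Field F] {lam : F} {R : (ι → F) →ₗ[F] (ι → F)}

theorem add_mulLeft_map_mul (hR : IsRotaBaxter F lam R) {t : ι → F}
    (ht : ∀ i, t i = 0 ∨ t i = lam) (x y : ι → F) :
    (R + LinearMap.mulLeft F t) (R x * y + x * R y + lam • (x * y)) =
      (R + LinearMap.mulLeft F t) x * (R + LinearMap.mulLeft F t) y := by
  funext i
  rcases ht i with h | h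
  · simp only [LinearMap.add_apply, LinearMap.mulLeft_apply, Pi.add_apply, Pi.mul_apply, h,
      zero_mul, add_zero]
    exact (congrFun (hR x y) i).symm
  · simpa only [LinearMap.add_apply, LinearMap.mulLeft_apply, Pi.add_apply, Pi.mul_apply,
      Pi.smul_apply, smul_eq_mul, h] using congrFun (hR.add_smul_map_mul x y) i

theorem apply_single_mul_apply_single_eq_zero_s18 [DecidableEq ι] (hR : IsRotaBaxter F lam R)
    {i j : ι} (hij : i ≠ j) : R (Pi.single i 1) j * R (Pi.single j 1) i = 0 := by
  have h := congrFun (hR (Pi.single i 1) (Pi.single j 1)) i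
  have hsingle : ∀ (k : ι) (x : ι → F), x * Pi.single k 1 = x k • Pi.single k 1 := by
    intro k x; funext l; by_cases hl : l = k <;> simp [hl]
  rw [hsingle j, mul_comm (Pi.single i 1), hsingle i, hsingle j (Pi.single i 1)] at h
  simp only [Pi.mul_apply, ne_eq, hij.symm, not_false_eq_true, Pi.single_eq_of_ne, zero_smul,
    smul_zero, add_zero, map_add, map_smul, Pi.add_apply, Pi.smul_apply, smul_eq_mul] at h
  linear_combination -h

end IsRotaBaxter

theorem exists_eq_zero_or_eq_and_add_ne_zero {M : Type*} [AddZeroClass M] {lam : M}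
    (hlam : lam ≠ 0) (a : M) : ∃ t, (t = 0 ∨ t = lam) ∧ a + t ≠ 0 := by
  by_cases ha : a = 0
  · exact ⟨lam, Or.inr rfl, by simpa [ha]⟩
  · exact ⟨0, Or.inl rfl, by simpa⟩

theorem LinearMap.det_add_mulLeft_fin_two {K : Type*} [CommRing K]
    (f : (Fin 2 → K) →ₗ[K] (Fin 2 → K)) (t : Fin 2 → K) :
    LinearMap.det (f + LinearMap.mulLeft K t) =
      (f (Pi.single 0 1) 0 + t 0) * (f (Pi.single 1 1) 1 + t 1) -
        f (Pi.single 1 1) 0 * f (Pi.single 0 1) 1 := by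
  rw [← LinearMap.det_toMatrix', Matrix.det_fin_two]
  simp [LinearMap.toMatrix'_apply]

theorem stmt18_general (F : Type*) [Field F]
    (lam : F) (hlam : lam ≠ 0)
    (R : (Fin 2 → F) →ₗ[F] (Fin 2 → F)) (hR : IsRotaBaxter F lam R) :
    ∃ e : (Fin 2 → F) ≃ₗ[F] (Fin 2 → F),
      ∀ x y : Fin 2 → F,
        e (R x * y + x * R y + lam • (x * y)) = e x * e y := by
  obtain ⟨t₀, ht₀, hR₀⟩ := exists_eq_zero_or_eq_and_add_ne_zero hlam (R (Pi.single 0 1) 0)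
  obtain ⟨t₁, ht₁, hR₁⟩ := exists_eq_zero_or_eq_and_add_ne_zero hlam (R (Pi.single 1 1) 1)
  set f := R + LinearMap.mulLeft F ![t₀, t₁]
  have hdet : LinearMap.det f ≠ 0 := by
    rw [LinearMap.det_add_mulLeft_fin_two, mul_comm (R _ 0),
      hR.apply_single_mul_apply_single_eq_zero_s18 zero_ne_one, sub_zero]
    exact mul_ne_zero hR₀ hR₁
  refine ⟨f.equivOfDetNeZero hdet, hR.add_mulLeft_map_mul fun i => ?_⟩
  fin_cases i
  exacts [ht₀, ht₁]

theorem stmt18 (F : Type*) [Field F] (h2 : (2 : F) ≠ 0)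
    (lam : F) (hlam : lam ≠ 0)
    (R : (Fin 2 → F) →ₗ[F] (Fin 2 → F)) (hR : IsRotaBaxter F lam R) :
    ∃ e : (Fin 2 → F) ≃ₗ[F] (Fin 2 → F),
      ∀ x y : Fin 2 → F,
        e (R x * y + x * R y + lam • (x * y)) = e x * e y :=
  stmt18_general F lam hlam R hR
end
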